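/- arXiv:2306.02932 — 4 statements merged into one kernel-verified Lean document; each statement's English description precedes it below -/
import Mathlib

section
/- Let K be a compact subset of ℝ^n with nonempty interior U, let σ : ℝ^n → ℝ be continuous on K, and let λ ∈ ℝ. Suppose θ₁ : ℝ^n → ℝ is continuous on K, C² on U, strictly positive on U, vanishes on the frontier of K, and satisfies −Δθ₁(x) + (1/4)σ(x)θ₁(x) = λθ₁(x) for all x ∈ U. Then for every function θ : ℝ^n → ℝ that is continuous on K, C² on U, and strictly positive on all of K, there exists x₀ ∈ U with σ(x₀) − 4Δθ(x₀)/θ(x₀) ≤ 4λ. -/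
/-!
The ratio `θ₁ / θ` is continuous on `K`, vanishes on the frontier and is positive inside, so it
attains a positive maximum `m` at an interior point `x₀`. Then `θ₁ - m θ ≤ 0` on `K` with
equality at `x₀`, so its Laplacian at `x₀` is nonpositive: `Δθ₁(x₀) ≤ m Δθ(x₀)`. Substituting
`Δθ₁ = (σ/4 - λ) θ₁` and `θ₁(x₀) = m θ(x₀)` gives `(σ/4 - λ) θ(x₀) ≤ Δθ(x₀)`.
-/

open Filter Topology

/-- The Euclidean Laplacian of `f` at `x`: the trace of the second derivative. -/
noncomputable def lap {n : ℕ} (f : EuclideanSpace ℝ (Fin n) → ℝ)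
    (x : EuclideanSpace ℝ (Fin n)) : ℝ :=
  ∑ i : Fin n, fderiv ℝ (fderiv ℝ f) x (EuclideanSpace.single i 1) (EuclideanSpace.single i 1)

theorem IsLocalMax.deriv_deriv_nonpos {f : ℝ → ℝ} {a : ℝ} (h : IsLocalMax f a)
    (hf : ContinuousAt f a) : deriv (deriv f) a ≤ 0 := by
  by_contra! hpos
  have hmin : IsLocalMin f a := isLocalMin_of_deriv_deriv_pos hpos h.deriv_eq_zero hf
  have hconst : f =ᶠ[𝓝 a] fun _ => f a := by
    filter_upwards [h, hmin] with x hle hge using le_antisymm hle hge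
  refine hpos.ne' ?_
  rw [hconst.deriv.deriv_eq]
  simp

section SecondDerivative

variable {E : Type*} [NormedAddCommGroup E] [NormedSpace ℝ E]

theorem ContDiffAt.hasDerivAt_fderiv_add_smul {g : E → ℝ} {x : E} (hg : ContDiffAt ℝ 2 g x)
    (v : E) :
    HasDerivAt (fun t : ℝ => fderiv ℝ g (x + t • v) v) (fderiv ℝ (fderiv ℝ g) x v v) 0 := by
  have hline : HasDerivAt (fun t : ℝ => x + t • v) v 0 := by
    simpa using ((hasDerivAt_id (0 : ℝ)).smul_const v).const_add x
  have hD : HasFDerivAt (fderiv ℝ g) (fderiv ℝ (fderiv ℝ g) x) (x + (0 : ℝ) • v) := by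
    rw [zero_smul, add_zero]
    exact ((hg.fderiv_right (m := 1) le_rfl).differentiableAt one_ne_zero).hasFDerivAt
  exact (ContinuousLinearMap.apply ℝ ℝ v).hasFDerivAt.comp_hasDerivAt 0
    (hD.comp_hasDerivAt 0 hline)

theorem IsLocalMax.fderiv_fderiv_apply_self_nonpos {g : E → ℝ} {x : E} (h : IsLocalMax g x)
    (hg : ContDiffAt ℝ 2 g x) (v : E) : fderiv ℝ (fderiv ℝ g) x v v ≤ 0 := by
  have hcont : Continuous fun t : ℝ => x + t • v := by fun_prop
  have hline : Tendsto (fun t : ℝ => x + t • v) (𝓝 0) (𝓝 x) := by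
    simpa using hcont.tendsto 0
  have hderiv : deriv (fun t : ℝ => g (x + t • v)) =ᶠ[𝓝 0]
      fun t => fderiv ℝ g (x + t • v) v := by
    filter_upwards [hline.eventually (hg.eventually (by simp))] with t ht
    exact ((ht.differentiableAt two_ne_zero).hasFDerivAt.comp_hasDerivAt t
      (((hasDerivAt_id t).smul_const v).const_add x)).deriv.trans (by simp)
  have hmax : IsLocalMax (fun t : ℝ => g (x + t • v)) 0 := by
    filter_upwards [hline.eventually h] with t ht
    simpa using ht
  calc fderiv ℝ (fderiv ℝ g) x v v = deriv (deriv fun t : ℝ => g (x + t • v)) 0 := by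
        rw [hderiv.deriv_eq, (hg.hasDerivAt_fderiv_add_smul v).deriv]
    _ ≤ 0 := hmax.deriv_deriv_nonpos (hg.continuousAt.comp_of_eq hcont.continuousAt (by simp))

end SecondDerivative

theorem IsCompact.exists_isMaxOn_mem_interior {X : Type*} [TopologicalSpace X] [T2Space X]
    {K : Set X} {F : X → ℝ} (hK : IsCompact K) (hF : ContinuousOn F K) {u : X} (hu : u ∈ K)
    (hbd : ∀ x ∈ frontier K, F x < F u) : ∃ x ∈ interior K, IsMaxOn F K x := by
  obtain ⟨x, hxK, hmax⟩ := hK.exists_isMaxOn ⟨u, hu⟩ hF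
  refine ⟨x, ?_, hmax⟩
  by_contra hx
  have hfr : x ∈ frontier K := by
    rw [hK.isClosed.frontier_eq]
    exact ⟨hxK, hx⟩
  exact (hbd x hfr).not_ge (hmax hu)

section Laplacian

variable {n : ℕ} {f g : EuclideanSpace ℝ (Fin n) → ℝ} {x : EuclideanSpace ℝ (Fin n)}

theorem IsLocalMax.lap_nonpos (h : IsLocalMax f x) (hf : ContDiffAt ℝ 2 f x) : lap f x ≤ 0 :=
  Finset.sum_nonpos fun _ _ => h.fderiv_fderiv_apply_self_nonpos hf _

theorem lap_sub_const_mul (hf : ContDiffAt ℝ 2 f x) (hg : ContDiffAt ℝ 2 g x) (c : ℝ) :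
    lap (fun y => f y - c * g y) x = lap f x - c * lap g x := by
  have hD : fderiv ℝ (fun y => f y - c * g y) =ᶠ[𝓝 x]
      fun y => fderiv ℝ f y - c • fderiv ℝ g y := by
    filter_upwards [hf.eventually (by simp), hg.eventually (by simp)] with y hfy hgy
    have hfy := hfy.differentiableAt two_ne_zero
    have hgy := hgy.differentiableAt two_ne_zero
    rw [fderiv_fun_sub hfy (hgy.const_mul c), fderiv_const_mul hgy]
  have hD2 : fderiv ℝ (fderiv ℝ fun y => f y - c * g y) x =
      fderiv ℝ (fderiv ℝ f) x - c • fderiv ℝ (fderiv ℝ g) x := by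
    have hf' := (hf.fderiv_right (m := 1) le_rfl).differentiableAt one_ne_zero
    have hg' := (hg.fderiv_right (m := 1) le_rfl).differentiableAt one_ne_zero
    rw [hD.fderiv_eq, fderiv_fun_sub hf' (hg'.fun_const_smul c), fderiv_fun_const_smul hg']
  simp [lap, hD2, Finset.mul_sum, Finset.sum_sub_distrib]

theorem lap_le_div_mul_lap_of_isMaxOn_div {K : Set (EuclideanSpace ℝ (Fin n))}
    (hx : x ∈ interior K) (hf : ContDiffAt ℝ 2 f x) (hg : ContDiffAt ℝ 2 g x)
    (hgpos : ∀ y ∈ K, 0 < g y) (hmax : IsMaxOn (fun y => f y / g y) K x) :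
    lap f x ≤ f x / g x * lap g x := by
  set m := f x / g x
  have hfx : f x - m * g x = 0 := by
    rw [div_mul_cancel₀ _ (hgpos x (interior_subset hx)).ne', sub_self]
  have hloc : IsLocalMax (fun y => f y - m * g y) x := by
    filter_upwards [mem_interior_iff_mem_nhds.1 hx] with y hy
    have hy' : f y / g y ≤ m := hmax hy
    rw [div_le_iff₀ (hgpos y hy)] at hy'
    linarith
  have hnonpos := hloc.lap_nonpos (hf.sub (contDiffAt_const.mul hg))
  rw [lap_sub_const_mul hf hg] at hnonpos
  linarith

end Laplacian

theorem quarter_proposition_general {n : ℕ}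
    (K : Set (EuclideanSpace ℝ (Fin n))) (hK : IsCompact K)
    (hUne : (interior K).Nonempty)
    (σ : EuclideanSpace ℝ (Fin n) → ℝ)
    (lam : ℝ)
    (θ₁ : EuclideanSpace ℝ (Fin n) → ℝ)
    (hθ₁cont : ContinuousOn θ₁ K)
    (hθ₁C2 : ContDiffOn ℝ 2 θ₁ (interior K))
    (hθ₁pos : ∀ x ∈ interior K, 0 < θ₁ x)
    (hθ₁bd : ∀ x ∈ frontier K, θ₁ x = 0)
    (heig : ∀ x ∈ interior K, -lap θ₁ x + (1 / 4) * σ x * θ₁ x = lam * θ₁ x) :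
    ∀ θ : EuclideanSpace ℝ (Fin n) → ℝ,
      ContinuousOn θ K → ContDiffOn ℝ 2 θ (interior K) → (∀ x ∈ K, 0 < θ x) →
      ∃ x₀ ∈ interior K, σ x₀ - 4 * lap θ x₀ / θ x₀ ≤ 4 * lam := by
  intro θ hθcont hθC2 hθpos
  obtain ⟨u, hu⟩ := hUne
  have hFu : 0 < θ₁ u / θ u := div_pos (hθ₁pos u hu) (hθpos u (interior_subset hu))
  obtain ⟨x₀, hx₀, hmax⟩ := hK.exists_isMaxOn_mem_interior
    (hθ₁cont.div hθcont fun y hy => (hθpos y hy).ne') (interior_subset hu)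
    (fun x hx => by simpa [hθ₁bd x hx] using hFu)
  have hm : 0 < θ₁ x₀ / θ x₀ := hFu.trans_le (hmax (interior_subset hu))
  have hθx₀ : 0 < θ x₀ := hθpos x₀ (interior_subset hx₀)
  have hcmp := lap_le_div_mul_lap_of_isMaxOn_div hx₀
    (hθ₁C2.contDiffAt (isOpen_interior.mem_nhds hx₀))
    (hθC2.contDiffAt (isOpen_interior.mem_nhds hx₀)) hθpos hmax
  have hlap : (σ x₀ / 4 - lam) * θ x₀ ≤ lap θ x₀ := by
    rw [show lap θ₁ x₀ = (σ x₀ / 4 - lam) * θ x₀ * (θ₁ x₀ / θ x₀) by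
      field_simp; linarith [heig x₀ hx₀]] at hcmp
    exact le_of_mul_le_mul_right (by linarith) hm
  refine ⟨x₀, hx₀, ?_⟩
  rw [sub_le_iff_le_add, ← sub_le_iff_le_add', le_div_iff₀ hθx₀]
  linarith

/-- The 1/4-Proposition (Euclidean-domain form): `sup_θ inf_x (σ − 4Δθ/θ) ≤ 4λ₁`. -/
theorem quarter_proposition {n : ℕ}
    (K : Set (EuclideanSpace ℝ (Fin n))) (hK : IsCompact K)
    (hUne : (interior K).Nonempty)
    (σ : EuclideanSpace ℝ (Fin n) → ℝ) (hσ : ContinuousOn σ K)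
    (lam : ℝ)
    (θ₁ : EuclideanSpace ℝ (Fin n) → ℝ)
    (hθ₁cont : ContinuousOn θ₁ K)
    (hθ₁C2 : ContDiffOn ℝ 2 θ₁ (interior K))
    (hθ₁pos : ∀ x ∈ interior K, 0 < θ₁ x)
    (hθ₁bd : ∀ x ∈ frontier K, θ₁ x = 0)
    (heig : ∀ x ∈ interior K, -lap θ₁ x + (1 / 4) * σ x * θ₁ x = lam * θ₁ x) :
    ∀ θ : EuclideanSpace ℝ (Fin n) → ℝ,
      ContinuousOn θ K → ContDiffOn ℝ 2 θ (interior K) → (∀ x ∈ K, 0 < θ x) →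
      ∃ x₀ ∈ interior K, σ x₀ - 4 * lap θ x₀ / θ x₀ ≤ 4 * lam :=
  quarter_proposition_general K hK hUne σ lam θ₁ hθ₁cont hθ₁C2 hθ₁pos hθ₁bd heig
end

section
/- Let a < b be real numbers and let θ : ℝ → ℝ be continuous on [a,b], twice continuously differentiable on (a,b), and strictly positive on [a,b]. Then there exists x ∈ (a,b) such that −θ''(x)/θ(x) ≤ π²/(b−a)²; equivalently, −4θ''(x) ≤ (4π²/(b−a)²) · θ(x). -/
open Real

theorem interval_eigenvalue_upper_bound (a b : ℝ) (hab : a < b)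
    (θ : ℝ → ℝ)
    (hcont : ContinuousOn θ (Set.Icc a b))
    (hC2 : ContDiffOn ℝ 2 θ (Set.Ioo a b))
    (hpos : ∀ x ∈ Set.Icc a b, 0 < θ x) :
    ∃ x ∈ Set.Ioo a b,
      -(deriv (deriv θ) x) / θ x ≤ π ^ 2 / (b - a) ^ 2 ∧
      -4 * deriv (deriv θ) x ≤ 4 * π ^ 2 / (b - a) ^ 2 * θ x := by
  by_contra hcon
  push_neg at hcon
  set L := b - a with hL
  have hL0 : 0 < L := sub_pos.mpr hab
  set k := π / L with hk
  have hk0 : 0 < k := div_pos Real.pi_pos hL0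
  have hk2 : k ^ 2 = π ^ 2 / L ^ 2 := by rw [hk, div_pow]
  have hkL : k * L = π := by rw [hk]; field_simp
  -- negated hypothesis
  have hneg : ∀ x ∈ Set.Ioo a b, deriv (deriv θ) x + k ^ 2 * θ x < 0 := by
    intro x hx
    by_contra hc
    push_neg at hc
    have hθx : 0 < θ x := hpos x (Set.Ioo_subset_Icc_self hx)
    have hA : -(deriv (deriv θ) x) / θ x ≤ π ^ 2 / L ^ 2 := by
      rw [div_le_iff₀ hθx, ← hk2]; nlinarith
    have hB := hcon x hx hA
    have h4 : 4 * π ^ 2 / L ^ 2 = 4 * k ^ 2 := by rw [hk2]; ring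
    rw [h4] at hB
    nlinarith
  set φ : ℝ → ℝ := fun x => Real.sin (k * (x - a)) with hφdef
  have hlin : ∀ x : ℝ, HasDerivAt (fun y : ℝ => k * (y - a)) k x := by
    intro x
    simpa using ((hasDerivAt_id x).sub_const a).const_mul k
  have hφd : ∀ x : ℝ, HasDerivAt φ (k * Real.cos (k * (x - a))) x := by
    intro x
    exact ((Real.hasDerivAt_sin (k * (x - a))).comp x (hlin x)).congr_deriv (mul_comm _ _)
  have hφd2 : ∀ x : ℝ, HasDerivAt (fun y => k * Real.cos (k * (y - a)))
      (-(k ^ 2) * φ x) x := by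
    intro x
    have h2 := ((Real.hasDerivAt_cos (k * (x - a))).comp x (hlin x)).const_mul k
    refine h2.congr_deriv ?_
    simp only [hφdef]; ring
  have hφpos : ∀ x ∈ Set.Ioo a b, 0 < φ x := by
    intro x hx
    apply Real.sin_pos_of_pos_of_lt_pi
    · have : 0 < x - a := sub_pos.mpr hx.1
      positivity
    · nlinarith [hx.2]
  have hθd : ∀ x ∈ Set.Ioo a b, HasDerivAt θ (deriv θ x) x := by
    intro x hx
    exact ((hC2.differentiableOn (by norm_num) x hx).differentiableAt
      (isOpen_Ioo.mem_nhds hx)).hasDerivAt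
  have hC1 : ContDiffOn ℝ 1 (deriv θ) (Set.Ioo a b) := by
    have := hC2.deriv_of_isOpen (m := 1) isOpen_Ioo (by norm_num)
    simpa using this
  have hθd2 : ∀ x ∈ Set.Ioo a b, HasDerivAt (deriv θ) (deriv (deriv θ) x) x := by
    intro x hx
    exact ((hC1.differentiableOn (by norm_num) x hx).differentiableAt
      (isOpen_Ioo.mem_nhds hx)).hasDerivAt
  set W : ℝ → ℝ := fun x => φ x * deriv θ x - (k * Real.cos (k * (x - a))) * θ x with hWdef
  have hWd : ∀ x ∈ Set.Ioo a b,
      HasDerivAt W (φ x * (deriv (deriv θ) x + k ^ 2 * θ x)) x := by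
    intro x hx
    have h := ((hφd x).mul (hθd2 x hx)).sub ((hφd2 x).mul (hθd x hx))
    refine h.congr_deriv ?_
    ring
  have hWanti : StrictAntiOn W (Set.Ioo a b) := by
    apply strictAntiOn_of_deriv_neg (convex_Ioo a b)
    · intro x hx
      exact ((hWd x hx).differentiableAt).continuousAt.continuousWithinAt
    · intro x hx
      rw [interior_Ioo] at hx
      rw [(hWd x hx).deriv]
      exact mul_neg_of_pos_of_neg (hφpos x hx) (hneg x hx)
  -- minimum of θ
  obtain ⟨z, hz, hminon⟩ := isCompact_Icc.exists_isMinOn (Set.nonempty_Icc.mpr hab.le) hcont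
  have hmin : ∀ y ∈ Set.Icc a b, θ z ≤ θ y := fun y hy => hminon hy
  set m := θ z with hm
  have hm0 : 0 < m := hpos z hz
  set g : ℝ → ℝ := fun x => θ x / φ x with hgdef
  have hgd : ∀ x ∈ Set.Ioo a b, HasDerivAt g (W x / φ x ^ 2) x := by
    intro x hx
    have h := (hθd x hx).div (hφd x) (ne_of_gt (hφpos x hx))
    refine h.congr_deriv ?_
    rw [hWdef]
    ring
  -- case W c > 0
  have main_pos : ∀ c ∈ Set.Ioo a b, ¬ (0 < W c) := by
    intro c hc hWc
    have hmono : StrictMonoOn g (Set.Ioc a c) := by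
      apply strictMonoOn_of_deriv_pos (convex_Ioc a c)
      · intro x hx
        have hx' : x ∈ Set.Ioo a b := ⟨hx.1, lt_of_le_of_lt hx.2 hc.2⟩
        exact (hgd x hx').differentiableAt.continuousAt.continuousWithinAt
      · intro x hx
        rw [interior_Ioc] at hx
        have hx' : x ∈ Set.Ioo a b := ⟨hx.1, hx.2.trans hc.2⟩
        rw [(hgd x hx').deriv]
        have hWx : W c < W x := hWanti hx' hc hx.2
        have := hφpos x hx'
        exact div_pos (hWc.trans hWx) (pow_pos (hφpos x hx') 2)
    set G := g c with hG
    have hφc := hφpos c hc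
    have hG0 : 0 < G := div_pos (hpos c (Set.Ioo_subset_Icc_self hc)) hφc
    set ε : ℝ := min ((c - a)/2) (m / (G * k) / 2) with hε
    have hε0 : 0 < ε := lt_min (by linarith [hc.1]) (by positivity)
    set x := a + ε with hx
    have hxc : x < c := by
      have := min_le_left ((c - a)/2) (m / (G * k) / 2)
      simp only [hx]
      linarith [hc.1]
    have hxab : x ∈ Set.Ioo a b := ⟨by simp [hx]; linarith, hxc.trans hc.2⟩
    have hφx : φ x < m / G := by
      have hxa : x - a = ε := by rw [hx]; ring
      have h1 : φ x < k * (x - a) := by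
        have h0 : 0 < k * (x - a) := by rw [hxa]; positivity
        exact Real.sin_lt h0
      have h2 : k * ε ≤ m / G / 2 := by
        have h3 := min_le_right ((c - a)/2) (m / (G * k) / 2)
        have : k * ε ≤ k * (m / (G * k) / 2) := by
          apply mul_le_mul_of_nonneg_left _ hk0.le
          exact h3
        calc k * ε ≤ k * (m / (G * k) / 2) := this
          _ = m / G / 2 := by field_simp
      have hmG : 0 < m / G := by positivity
      rw [hxa] at h1
      linarith
    have hgx : G < g x := by
      rw [hgdef]
      rw [lt_div_iff₀ (hφpos x hxab)]
      have hθx := hmin x (Set.Ioo_subset_Icc_self hxab)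
      have : G * φ x < G * (m / G) := by
        exact mul_lt_mul_of_pos_left hφx hG0
      rw [mul_div_cancel₀ _ (ne_of_gt hG0)] at this
      linarith
    have := hmono ⟨hxab.1, hxc.le⟩ ⟨hc.1, le_refl c⟩ hxc
    rw [← hG] at this
    linarith
  -- case W c < 0
  have main_neg : ∀ c ∈ Set.Ioo a b, ¬ (W c < 0) := by
    intro c hc hWc
    have hanti : StrictAntiOn g (Set.Ico c b) := by
      apply strictAntiOn_of_deriv_neg (convex_Ico c b)
      · intro x hx
        have hx' : x ∈ Set.Ioo a b := ⟨lt_of_lt_of_le hc.1 hx.1, hx.2⟩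
        exact (hgd x hx').differentiableAt.continuousAt.continuousWithinAt
      · intro x hx
        rw [interior_Ico] at hx
        have hx' : x ∈ Set.Ioo a b := ⟨hc.1.trans hx.1, hx.2⟩
        rw [(hgd x hx').deriv]
        have hWx : W x < W c := hWanti hc hx' hx.1
        exact div_neg_of_neg_of_pos (hWx.trans hWc) (pow_pos (hφpos x hx') 2)
    set G := g c with hG
    have hφc := hφpos c hc
    have hG0 : 0 < G := div_pos (hpos c (Set.Ioo_subset_Icc_self hc)) hφc
    set ε : ℝ := min ((b - c)/2) (m / (G * k) / 2) with hε
    have hε0 : 0 < ε := lt_min (by linarith [hc.2]) (by positivity)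
    set x := b - ε with hx
    have hxc : c < x := by
      have := min_le_left ((b - c)/2) (m / (G * k) / 2)
      simp only [hx]
      linarith [hc.2]
    have hxab : x ∈ Set.Ioo a b := ⟨hc.1.trans hxc, by simp [hx]; linarith⟩
    have hφx : φ x < m / G := by
      have hxa : b - x = ε := by rw [hx]; ring
      have hsymm : k * (x - a) = π - k * (b - x) := by
        have hxdec : x - a = L - (b - x) := by rw [hL]; ring
        rw [hxdec, mul_sub, hkL]
      have h1 : φ x < k * (b - x) := by
        have h0 : 0 < k * (b - x) := by rw [hxa]; positivity
        calc φ x = Real.sin (π - k * (b - x)) := by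
              simp only [hφdef]; rw [hsymm]
          _ = Real.sin (k * (b - x)) := Real.sin_pi_sub _
          _ < k * (b - x) := Real.sin_lt h0
      have h2 : k * ε ≤ m / G / 2 := by
        have h3 := min_le_right ((b - c)/2) (m / (G * k) / 2)
        have : k * ε ≤ k * (m / (G * k) / 2) :=
          mul_le_mul_of_nonneg_left h3 hk0.le
        calc k * ε ≤ k * (m / (G * k) / 2) := this
          _ = m / G / 2 := by field_simp
      have hmG : 0 < m / G := by positivity
      rw [hxa] at h1
      linarith
    have hgx : G < g x := by
      rw [hgdef]
      rw [lt_div_iff₀ (hφpos x hxab)]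
      have hθx := hmin x (Set.Ioo_subset_Icc_self hxab)
      have : G * φ x < G * (m / G) := mul_lt_mul_of_pos_left hφx hG0
      rw [mul_div_cancel₀ _ (ne_of_gt hG0)] at this
      linarith
    have := hanti ⟨le_refl c, hc.2⟩ ⟨hxc.le, hxab.2⟩ hxc
    rw [← hG] at this
    linarith
  -- conclude
  set c1 : ℝ := (a + b) / 2 with hc1
  set c2 : ℝ := (c1 + b) / 2 with hc2
  have hc1m : c1 ∈ Set.Ioo a b := ⟨by rw [hc1]; linarith, by rw [hc1]; linarith⟩
  have hc2m : c2 ∈ Set.Ioo a b :=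
    ⟨by rw [hc2, hc1]; linarith, by rw [hc2, hc1]; linarith⟩
  have h12 : c1 < c2 := by rw [hc2, hc1]; linarith
  rcases lt_or_ge 0 (W c1) with h | h
  · exact main_pos c1 hc1m h
  · have : W c2 < W c1 := hWanti hc1m hc2m h12
    exact main_neg c2 hc2m (lt_of_lt_of_le this h)
end

section
/- Let n ≥ 1, let a_i < b_i for i = 1, …, n, and let K = Π_{i=1}^n [a_i, b_i] ⊂ ℝ^n be the rectangular solid. Let θ : ℝ^n → ℝ be continuous on K, C² on the interior of K, and strictly positive on K. Then there exists x in the interior of K such that −4Δθ(x) ≤ (Σ_{i=1}^n 4π²/(b_i−a_i)²) · θ(x). -/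
open Real

open Filter Topology

lemma second_deriv_nonneg_of_isLocalMin {h : ℝ → ℝ}
    (hd : ∀ᶠ t in 𝓝 (0:ℝ), DifferentiableAt ℝ h t)
    (hd2 : DifferentiableAt ℝ (deriv h) 0)
    (hmin : IsLocalMin h 0) : 0 ≤ deriv (deriv h) 0 := by
  by_contra hlt
  push_neg at hlt
  set d := deriv (deriv h) 0 with hdd
  have h0 : deriv h 0 = 0 := hmin.deriv_eq_zero
  have hs : Tendsto (slope (deriv h) 0) (𝓝[≠] 0) (𝓝 d) :=
    hasDerivAt_iff_tendsto_slope.1 hd2.hasDerivAt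
  have hd2' : d / 2 < 0 := by linarith
  have hev1 : ∀ᶠ s in 𝓝[≠] (0:ℝ), slope (deriv h) 0 s < d / 2 :=
    hs.eventually_lt_const (by linarith)
  rw [eventually_nhdsWithin_iff] at hev1
  have hall : ∀ᶠ s in 𝓝 (0:ℝ), (s ∈ ({(0:ℝ)}ᶜ : Set ℝ) → slope (deriv h) 0 s < d / 2)
      ∧ DifferentiableAt ℝ h s ∧ h 0 ≤ h s := hev1.and (hd.and hmin)
  rw [Metric.eventually_nhds_iff] at hall
  obtain ⟨δ, hδ, hδ'⟩ := hall
  have hmem : ∀ s ∈ Set.Icc (0:ℝ) (δ/2), dist s 0 < δ := by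
    intro s hs
    rw [Real.dist_eq, sub_zero, abs_of_nonneg hs.1]
    linarith [hs.2]
  have hanti : StrictAntiOn h (Set.Icc 0 (δ/2)) := by
    apply strictAntiOn_of_deriv_neg (convex_Icc _ _)
    · intro s hs
      exact ((hδ' (hmem s hs)).2.1).continuousAt.continuousWithinAt
    · intro s hs
      rw [interior_Icc] at hs
      have hsd := hδ' (hmem s ⟨le_of_lt hs.1, le_of_lt hs.2⟩)
      have hslope := hsd.1 (by simpa using ne_of_gt hs.1)
      rw [slope_def_field, h0] at hslope
      have : (deriv h s - 0) / (s - 0) < 0 := lt_trans hslope hd2'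
      rw [sub_zero, sub_zero] at this
      rcases div_neg_iff.1 this with ⟨_, hneg⟩ | ⟨hneg, _⟩
      · linarith [hs.1]
      · exact hneg
  have h1 : h (δ/2) < h 0 :=
    hanti ⟨le_refl 0, by positivity⟩ ⟨by positivity, le_refl _⟩ (by positivity)
  have h2 : h 0 ≤ h (δ/2) := (hδ' (hmem _ ⟨by positivity, le_refl _⟩)).2.2
  linarith

lemma second_line_deriv {E : Type*} [NormedAddCommGroup E] [NormedSpace ℝ E]
    {f : E → ℝ} {U : Set E} (hU : IsOpen U) (hf : ContDiffOn ℝ 2 f U)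
    {x : E} (hx : x ∈ U) (v : E) :
    deriv (deriv fun t : ℝ => f (x + t • v)) 0 = fderiv ℝ (fderiv ℝ f) x v v := by
  set γ : ℝ → E := fun t => x + t • v with hγdef
  have hγ : ∀ t, HasDerivAt γ v t := by
    intro t
    show HasDerivAt (fun t => x + t • v) v t
    simpa using ((hasDerivAt_id t).smul_const v).const_add x
  have hγ0 : γ 0 = x := by simp [hγdef]
  have hfd : ∀ y ∈ U, HasFDerivAt f (fderiv ℝ f y) y := fun y hy =>
    ((hf.differentiableOn (by norm_num) y hy).differentiableAt (hU.mem_nhds hy)).hasFDerivAt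
  have hF : ContDiffOn ℝ 1 (fderiv ℝ f) U := hf.fderiv_of_isOpen hU (by norm_num)
  have hFd : DifferentiableAt ℝ (fderiv ℝ f) x :=
    ((hF.differentiableOn (by norm_num)) x hx).differentiableAt (hU.mem_nhds hx)
  have hγc : Continuous γ := by continuity
  have hVo : IsOpen (γ ⁻¹' U) := hU.preimage hγc
  have h0 : (0:ℝ) ∈ γ ⁻¹' U := by simp [Set.mem_preimage, hγ0, hx]
  have key : ∀ t ∈ γ ⁻¹' U, deriv (fun s => f (γ s)) t = (fderiv ℝ f (γ t)) v := by
    intro t ht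
    exact ((hfd _ ht).comp_hasDerivAt t (hγ t)).deriv
  have ev : (deriv fun s => f (γ s)) =ᶠ[𝓝 (0:ℝ)] fun t => (fderiv ℝ f (γ t)) v :=
    eventually_of_mem (hVo.mem_nhds h0) key
  rw [show (fun t : ℝ => f (x + t • v)) = fun s => f (γ s) from rfl, ev.deriv_eq]
  have h2 : HasDerivAt (fun t => (fderiv ℝ f (γ t)) v)
      ((fderiv ℝ (fderiv ℝ f) x) v v) 0 := by
    have hc : HasDerivAt (fun t => fderiv ℝ f (γ t))
        ((fderiv ℝ (fderiv ℝ f) x) v) 0 := by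
      have hx0 : HasFDerivAt (fderiv ℝ f) (fderiv ℝ (fderiv ℝ f) x) (γ 0) := by
        rw [hγ0]; exact hFd.hasFDerivAt
      have := hx0.comp_hasDerivAt 0 (hγ 0)
      exact this
    exact ((ContinuousLinearMap.apply ℝ ℝ v).hasFDerivAt.comp_hasDerivAt 0 hc)
  exact h2.deriv

theorem box_eigenvalue_upper_bound {n : ℕ} (hn : 1 ≤ n)
    (a b : Fin n → ℝ) (hab : ∀ i, a i < b i)
    (K : Set (EuclideanSpace ℝ (Fin n)))
    (hK : K = WithLp.ofLp ⁻¹' Set.pi Set.univ fun i => Set.Icc (a i) (b i))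
    (θ : EuclideanSpace ℝ (Fin n) → ℝ)
    (hcont : ContinuousOn θ K)
    (hC2 : ContDiffOn ℝ 2 θ (interior K))
    (hpos : ∀ x ∈ K, 0 < θ x) :
    ∃ x ∈ interior K,
      -4 * lap θ x ≤ (∑ i : Fin n, 4 * π ^ 2 / (b i - a i) ^ 2) * θ x := by
  -- setup
  have hba : ∀ i, 0 < b i - a i := fun i => sub_pos.2 (hab i)
  set c : Fin n → ℝ := fun i => π / (b i - a i) with hcdef
  have hc : ∀ i, 0 < c i := fun i => div_pos pi_pos (hba i)
  have hcba : ∀ i, c i * (b i - a i) = π := fun i => div_mul_cancel₀ _ (ne_of_gt (hba i))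
  set s : Fin n → ℝ → ℝ := fun i t => Real.sin (c i * (t - a i)) with hsdef
  set φ : EuclideanSpace ℝ (Fin n) → ℝ := fun x => ∏ i, s i (x i) with hφdef
  -- topology
  have hKc : IsCompact K := by
    rw [hK]; exact (PiLp.homeomorph 2 (fun _ : Fin n => ℝ)).isCompact_preimage.2 (isCompact_univ_pi fun i => isCompact_Icc)
  have hIntK : interior K = WithLp.ofLp ⁻¹' Set.pi Set.univ fun i => Set.Ioo (a i) (b i) := by
    rw [hK, show (WithLp.ofLp ⁻¹' Set.pi Set.univ fun i => Set.Icc (a i) (b i) : Set (EuclideanSpace ℝ (Fin n))) = (PiLp.homeomorph 2 (fun _ : Fin n => ℝ)) ⁻¹' Set.pi Set.univ fun i => Set.Icc (a i) (b i) from rfl,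
      ← Homeomorph.preimage_interior, interior_pi_set Set.finite_univ]; simp [interior_Icc]; rfl
  have hIK : interior K ⊆ K := interior_subset
  -- φ facts
  have hφc : Continuous φ := by
    apply continuous_finset_prod
    intro i _
    exact Real.continuous_sin.comp
      ((continuous_const.mul (((EuclideanSpace.proj i).continuous).sub continuous_const)))
  have hφpos : ∀ x ∈ interior K, 0 < φ x := by
    intro x hx
    rw [hIntK] at hx
    apply Finset.prod_pos
    intro i _
    have hxi := hx i (Set.mem_univ i)
    apply Real.sin_pos_of_pos_of_lt_pi
    · exact mul_pos (hc i) (sub_pos.2 hxi.1)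
    · calc c i * (x i - a i) < c i * (b i - a i) := by
            apply mul_lt_mul_of_pos_left _ (hc i)
            linarith [hxi.2]
        _ = π := hcba i
  have hφ0 : ∀ x ∈ K, x ∉ interior K → φ x = 0 := by
    intro x hx hx'
    rw [hK] at hx
    rw [hIntK] at hx'
    have hx'' : ∃ i, x i ∉ Set.Ioo (a i) (b i) := by
      by_contra hcontra
      push_neg at hcontra
      exact hx' fun i _ => hcontra i
    obtain ⟨i, hi⟩ := hx''
    have hxi := hx i (Set.mem_univ i)
    have : x i = a i ∨ x i = b i := by
      simp only [Set.mem_Ioo, not_and_or, not_lt] at hi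
      rcases hi with h | h
      · exact Or.inl (le_antisymm h hxi.1)
      · exact Or.inr (le_antisymm hxi.2 h)
    apply Finset.prod_eq_zero (Finset.mem_univ i)
    show Real.sin (c i * (x i - a i)) = 0
    rcases this with h | h
    · rw [h]; simp
    · rw [h, hcba i]; exact Real.sin_pi
  -- midpoint
  set m : EuclideanSpace ℝ (Fin n) := WithLp.toLp 2 (fun i => (a i + b i) / 2) with hmdef
  have hmI : m ∈ interior K := by
    rw [hIntK]
    intro i _
    constructor
    · show a i < (a i + b i) / 2; linarith [hab i]
    · show (a i + b i) / 2 < b i; linarith [hab i]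
  -- maximum of φ/θ
  have hθne : ∀ x ∈ K, θ x ≠ 0 := fun x hx => ne_of_gt (hpos x hx)
  have hg : ContinuousOn (fun x => φ x / θ x) K := (hφc.continuousOn).div hcont hθne
  obtain ⟨x₀, hx₀K, hmax⟩ := hKc.exists_isMaxOn ⟨m, hIK hmI⟩ hg
  set M := φ x₀ / θ x₀ with hMdef
  have hM : 0 < M :=
    lt_of_lt_of_le (div_pos (hφpos m hmI) (hpos m (hIK hmI))) (hmax (hIK hmI))
  have hMθ : M * θ x₀ = φ x₀ := div_mul_cancel₀ _ (hθne x₀ hx₀K)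
  have hφx₀ : 0 < φ x₀ := by rw [← hMθ]; exact mul_pos hM (hpos x₀ hx₀K)
  have hx₀ : x₀ ∈ interior K := by
    by_contra h
    exact absurd (hφ0 x₀ hx₀K h) (ne_of_gt hφx₀)
  have hkey : ∀ x ∈ K, φ x ≤ M * θ x := fun x hx => (div_le_iff₀ (hpos x hx)).1 (hmax hx)
  -- per coordinate estimate
  have key : ∀ i : Fin n, -(c i)^2 * (M * θ x₀) ≤
      M * (fderiv ℝ (fderiv ℝ θ) x₀ (EuclideanSpace.single i 1) (EuclideanSpace.single i 1)) := by
    intro i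
    set v : EuclideanSpace ℝ (Fin n) := EuclideanSpace.single i 1 with hvdef
    set γ : ℝ → EuclideanSpace ℝ (Fin n) := fun t => x₀ + t • v with hγdef
    have hγc : Continuous γ := continuous_const.add (continuous_id.smul continuous_const)
    have hγ0 : γ 0 = x₀ := by simp [hγdef]
    have hγi : ∀ t, γ t i = x₀ i + t := by
      intro t; simp [hγdef, hvdef, EuclideanSpace.single_apply]
    have hγj : ∀ t j, j ≠ i → γ t j = x₀ j := by
      intro t j hj; simp [hγdef, hvdef, EuclideanSpace.single_apply, hj]
    set P : ℝ := ∏ j ∈ Finset.univ.erase i, s j (x₀ j) with hPdef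
    have hP : ∀ t, φ (γ t) = P * Real.sin (c i * (x₀ i + t - a i)) := by
      intro t
      show (∏ j, s j (γ t j)) = P * Real.sin (c i * (x₀ i + t - a i))
      rw [← Finset.mul_prod_erase Finset.univ _ (Finset.mem_univ i), mul_comm]
      congr 1
      · exact Finset.prod_congr rfl fun j hj => by
          rw [hγj t j (Finset.ne_of_mem_erase hj)]
      · show Real.sin (c i * (γ t i - a i)) = _
        rw [hγi t]
    have hφx₀' : φ x₀ = P * s i (x₀ i) := by
      have h := hP 0
      rw [hγ0] at h
      rw [h]
      show P * _ = P * Real.sin (c i * (x₀ i - a i))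
      norm_num
    -- 1D function q and its derivatives
    set u₁ : ℝ → ℝ := fun t => c i * (x₀ i + t - a i) with hu₁def
    have hu₁ : ∀ t, HasDerivAt u₁ (c i) t := by
      intro t
      have h1 : HasDerivAt (fun t : ℝ => x₀ i + t - a i) 1 t :=
        ((hasDerivAt_id t).const_add (x₀ i)).sub_const (a i)
      simpa using h1.const_mul (c i)
    set q : ℝ → ℝ := fun t => P * Real.sin (u₁ t) with hqdef
    set q' : ℝ → ℝ := fun t => P * (Real.cos (u₁ t) * c i) with hq'def
    have hq1 : ∀ t, HasDerivAt q (q' t) t := fun t => ((hu₁ t).sin).const_mul P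
    have hq_eq : ∀ t, q t = φ (γ t) := by
      intro t
      rw [show q t = P * Real.sin (c i * (x₀ i + t - a i)) from rfl, ← hP t]
    have hq2 : HasDerivAt q' (-(c i)^2 * φ x₀) 0 := by
      have h1 : HasDerivAt (fun t => Real.cos (u₁ t) * c i)
          ((-Real.sin (u₁ 0) * c i) * c i) 0 := ((hu₁ 0).cos).mul_const (c i)
      have h2 := h1.const_mul P
      refine h2.congr_deriv ?_
      rw [hφx₀', hsdef]
      simp only [hu₁def]
      ring_nf
    -- θ along the line
    set θγ : ℝ → ℝ := fun t => θ (γ t) with hθγdef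
    have hγsm : ContDiff ℝ 2 γ := contDiff_const.add (contDiff_id.smul contDiff_const)
    have hθγ : ContDiffOn ℝ 2 θγ (γ ⁻¹' interior K) :=
      hC2.comp hγsm.contDiffOn (Set.mapsTo_preimage γ (interior K))
    have hVo : IsOpen (γ ⁻¹' interior K) := isOpen_interior.preimage hγc
    have h0V : (0:ℝ) ∈ γ ⁻¹' interior K := by
      rw [Set.mem_preimage, hγ0]; exact hx₀
    have hθγd : ∀ t ∈ γ ⁻¹' interior K, DifferentiableAt ℝ θγ t := fun t ht =>
      (hθγ.differentiableOn (by norm_num) t ht).differentiableAt (hVo.mem_nhds ht)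
    have hθγ' : DifferentiableAt ℝ (deriv θγ) 0 :=
      ((hθγ.deriv_of_isOpen (m := 1) hVo (by norm_num)).differentiableOn (by norm_num) 0 h0V).differentiableAt
        (hVo.mem_nhds h0V)
    -- local min
    set u : ℝ → ℝ := fun t => M * θγ t - q t with hudef
    have humin : IsLocalMin u 0 := by
      have hev : ∀ᶠ t in 𝓝 (0:ℝ), γ t ∈ interior K :=
        eventually_of_mem (hVo.mem_nhds h0V) fun t ht => ht
      filter_upwards [hev] with t ht
      have h1 : φ (γ t) ≤ M * θ (γ t) := hkey _ (hIK ht)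
      have h2 : u 0 = 0 := by
        simp only [hudef, hθγdef, hγ0]
        rw [hq_eq 0, hγ0, hMθ]
        ring
      rw [h2]
      simp only [hudef, hθγdef]
      rw [hq_eq t]
      linarith
    -- derivatives of u
    have hud : ∀ t ∈ γ ⁻¹' interior K, DifferentiableAt ℝ u t := fun t ht =>
      ((hθγd t ht).const_mul M).sub (hq1 t).differentiableAt
    have hud' : ∀ t ∈ γ ⁻¹' interior K, deriv u t = M * deriv θγ t - q' t := by
      intro t ht
      rw [hudef]
      rw [deriv_fun_sub ((hθγd t ht).const_mul M) (hq1 t).differentiableAt,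
        deriv_const_mul M (hθγd t ht), (hq1 t).deriv]
    have hev : deriv u =ᶠ[𝓝 (0:ℝ)] fun t => M * deriv θγ t - q' t :=
      eventually_of_mem (hVo.mem_nhds h0V) hud'
    have hdd : deriv (deriv u) 0 =
        M * deriv (deriv θγ) 0 - (-(c i)^2 * φ x₀) := by
      rw [hev.deriv_eq]
      rw [deriv_fun_sub (hθγ'.const_mul M) hq2.differentiableAt,
        deriv_const_mul M hθγ', hq2.deriv]
    have hge : 0 ≤ deriv (deriv u) 0 := by
      apply second_deriv_nonneg_of_isLocalMin _ _ humin
      · exact eventually_of_mem (hVo.mem_nhds h0V) hud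
      · exact hev.differentiableAt_iff.2 ((hθγ'.const_mul M).sub hq2.differentiableAt)
    have hline : deriv (deriv θγ) 0 =
        fderiv ℝ (fderiv ℝ θ) x₀ v v :=
      second_line_deriv isOpen_interior hC2 hx₀ v
    rw [hdd, hline] at hge
    rw [hMθ]
    linarith
  -- sum up
  refine ⟨x₀, hx₀, ?_⟩
  have hsum : ∑ i : Fin n, (-(c i)^2 * (M * θ x₀)) ≤
      ∑ i : Fin n, M * (fderiv ℝ (fderiv ℝ θ) x₀ (EuclideanSpace.single i 1)
        (EuclideanSpace.single i 1)) :=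
    Finset.sum_le_sum fun i _ => key i
  rw [← Finset.sum_mul, ← Finset.mul_sum] at hsum
  have hcsq : ∀ i, 4 * π ^ 2 / (b i - a i) ^ 2 = 4 * (c i)^2 := by
    intro i
    rw [hcdef]
    field_simp
  set S := ∑ i : Fin n, (c i)^2 with hSdef
  have hlap' : -S * θ x₀ ≤ lap θ x₀ := by
    have h1 : M * (-S * θ x₀) ≤ M * lap θ x₀ := by
      calc M * (-S * θ x₀) = (∑ i : Fin n, -(c i)^2) * (M * θ x₀) := by
            rw [hSdef, Finset.sum_neg_distrib]; ring
        _ ≤ M * ∑ i : Fin n, ((fderiv ℝ (fderiv ℝ θ) x₀) (EuclideanSpace.single i 1))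
              (EuclideanSpace.single i 1) := hsum
        _ = M * lap θ x₀ := rfl
    exact le_of_mul_le_mul_left h1 hM
  have hS4 : (∑ i : Fin n, 4 * π ^ 2 / (b i - a i) ^ 2) = 4 * S := by
    rw [hSdef, Finset.mul_sum]
    exact Finset.sum_congr rfl fun i _ => hcsq i
  rw [hS4]
  nlinarith [hlap']
end

section
/- Let n ≥ 1, let a_i < b_i for i = 1, …, n, and let K = Π_{i=1}^n [a_i, b_i] ⊂ ℝ^n. Then for every ε > 0 there exists a C² function θ : ℝ^n → ℝ that is strictly positive on K and satisfies −4Δθ(x) ≥ (Σ_{i=1}^n 4π²/(b_i−a_i)² − ε) · θ(x) for all x ∈ K. -/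
/-!
Take `θ(x) = ∏ᵢ cos (τ / (bᵢ - aᵢ) · (xᵢ - cᵢ))` with `cᵢ` the midpoint of `[aᵢ, bᵢ]` and
`|τ| < π`. Each factor solves `f'' = -(τ / (bᵢ - aᵢ))² f`, so `Δθ = -(∑ᵢ τ² / (bᵢ - aᵢ)²) θ`; on
the box every cosine argument has modulus at most `|τ| / 2 < π / 2`, so `θ > 0` there. Letting
`τ → π⁻` brings `4 ∑ᵢ τ² / (bᵢ - aᵢ)²` within `ε` of `∑ᵢ 4π² / (bᵢ - aᵢ)²`.
-/

open Real

open Finset Filter Topology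

theorem fderiv_fderiv_apply_self_eq_deriv_deriv {E : Type*} [NormedAddCommGroup E]
    [NormedSpace ℝ E] {g : E → ℝ} (hg : ContDiff ℝ 2 g) (x v : E) :
    fderiv ℝ (fderiv ℝ g) x v v = deriv (deriv fun t : ℝ => g (x + t • v)) 0 := by
  have hline (t : ℝ) : HasDerivAt (fun t : ℝ => x + t • v) v t := by
    simpa using ((hasDerivAt_id t).smul_const v).const_add x
  have hderiv : deriv (fun t : ℝ => g (x + t • v)) = fun t => fderiv ℝ g (x + t • v) v :=
    funext fun t => ((hg.differentiable two_ne_zero _).hasFDerivAt.comp_hasDerivAt t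
      (hline t)).deriv
  have hg' : HasFDerivAt (fun y => fderiv ℝ g y v) ((fderiv ℝ (fderiv ℝ g) x).flip v) x := by
    have hdiff := (hg.fderiv_right (m := 1) (by norm_num)).differentiable one_ne_zero x
    simpa using hdiff.hasFDerivAt.clm_apply (hasFDerivAt_const v x)
  rw [hderiv]
  exact ((hg'.comp_hasDerivAt_of_eq (0 : ℝ) (hline 0) (by simp)).deriv).symm

theorem deriv_comp_const_add_mul_const {g : ℝ → ℝ} (hg : Differentiable ℝ g) (a C : ℝ) :
    deriv (fun t => g (a + t) * C) = fun t => deriv g (a + t) * C :=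
  funext fun t => (((hg (a + t)).hasDerivAt.comp_const_add a t).mul_const C).deriv

theorem deriv_deriv_cos_mul_sub (k c t : ℝ) :
    deriv (deriv fun t => cos (k * (t - c))) t = -k ^ 2 * cos (k * (t - c)) := by
  have hinner (t : ℝ) : HasDerivAt (fun t => k * (t - c)) k t := by
    simpa using ((hasDerivAt_id t).sub_const c).const_mul k
  have h1 : deriv (fun t => cos (k * (t - c))) = fun t => -sin (k * (t - c)) * k :=
    funext fun t => ((hasDerivAt_cos _).comp t (hinner t)).deriv
  have h2 : HasDerivAt (fun t => -sin (k * (t - c)) * k) (-(cos (k * (t - c)) * k) * k) t :=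
    (((hasDerivAt_sin _).comp t (hinner t)).neg).mul_const k
  rw [h1, h2.deriv]
  ring

theorem contDiff_prod_apply {ι : Type*} [Fintype ι] {k : WithTop ℕ∞} {f : ι → ℝ → ℝ}
    (hf : ∀ i, ContDiff ℝ k (f i)) :
    ContDiff ℝ k fun y : EuclideanSpace ℝ ι => ∏ i, f i (y i) :=
  contDiff_prod fun i _ =>
    (hf i).comp (EuclideanSpace.proj i : EuclideanSpace ℝ ι →L[ℝ] ℝ).contDiff

theorem prod_apply_add_smul_single {ι : Type*} [Fintype ι] [DecidableEq ι] (f : ι → ℝ → ℝ)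
    (x : EuclideanSpace ℝ ι) (i : ι) (t : ℝ) :
    ∏ j, f j ((x + t • EuclideanSpace.single i (1 : ℝ) : EuclideanSpace ℝ ι) j) =
      f i (x i + t) * ∏ j ∈ univ.erase i, f j (x j) := by
  rw [← mul_prod_erase univ _ (mem_univ i)]
  congr 1
  · simp
  · refine prod_congr rfl fun j hj => ?_
    simp [ne_of_mem_erase hj]

theorem lap_prod_apply {n : ℕ} {f : Fin n → ℝ → ℝ} (hf : ∀ i, ContDiff ℝ 2 (f i))
    (x : EuclideanSpace ℝ (Fin n)) :
    lap (fun y => ∏ i, f i (y i)) x =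
      ∑ i, deriv (deriv (f i)) (x i) * ∏ j ∈ univ.erase i, f j (x j) := by
  refine sum_congr rfl fun i _ => ?_
  simp only [fderiv_fderiv_apply_self_eq_deriv_deriv (contDiff_prod_apply hf),
    prod_apply_add_smul_single, deriv_comp_const_add_mul_const ((hf i).differentiable two_ne_zero),
    deriv_comp_const_add_mul_const (hf i).differentiable_deriv_two, add_zero]

theorem lap_prod_apply_of_deriv_deriv_eq {n : ℕ} {f : Fin n → ℝ → ℝ} {μ : Fin n → ℝ}
    (hf : ∀ i, ContDiff ℝ 2 (f i)) (hμ : ∀ i t, deriv (deriv (f i)) t = -μ i * f i t)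
    (x : EuclideanSpace ℝ (Fin n)) :
    lap (fun y => ∏ i, f i (y i)) x = -(∑ i, μ i) * ∏ i, f i (x i) := by
  simp only [lap_prod_apply hf, hμ, mul_assoc,
    mul_prod_erase univ (fun j => f j (x j)) (mem_univ _), ← sum_mul, sum_neg_distrib]

theorem cos_mul_sub_midpoint_pos {a b τ x : ℝ} (hab : a < b) (hτ : |τ| < π)
    (hx : x ∈ Set.Icc a b) :
    0 < cos (τ / (b - a) * (x - (a + b) / 2)) := by
  have hL : 0 < b - a := sub_pos.mpr hab
  have hdist : |x - (a + b) / 2| ≤ (b - a) / 2 :=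
    abs_le.mpr ⟨by linarith [hx.1], by linarith [hx.2]⟩
  have hbound : |τ / (b - a) * (x - (a + b) / 2)| < π / 2 :=
    calc |τ / (b - a) * (x - (a + b) / 2)| = |τ| * |x - (a + b) / 2| / (b - a) := by
          rw [abs_mul, abs_div, abs_of_pos hL]; ring
      _ ≤ |τ| * ((b - a) / 2) / (b - a) := by gcongr
      _ = |τ| / 2 := by field_simp
      _ < π / 2 := by linarith
  exact cos_pos_of_mem_Ioo (abs_lt.mp hbound)

theorem box_eigenvalue_lower_bound_general {n : ℕ}
    (a b : Fin n → ℝ) (hab : ∀ i, a i < b i)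
    (K : Set (EuclideanSpace ℝ (Fin n)))
    (hK : K = (WithLp.ofLp : EuclideanSpace ℝ (Fin n) → (Fin n → ℝ)) ⁻¹' Set.pi Set.univ fun i => Set.Icc (a i) (b i)) :
    ∀ ε > (0 : ℝ), ∃ θ : EuclideanSpace ℝ (Fin n) → ℝ,
      ContDiff ℝ 2 θ ∧ (∀ x ∈ K, 0 < θ x) ∧
      ∀ x ∈ K, -4 * lap θ x ≥ (∑ i : Fin n, 4 * π ^ 2 / (b i - a i) ^ 2 - ε) * θ x := by
  intro ε hε
  have hlim : Tendsto (fun τ => ∑ i, 4 * τ ^ 2 / (b i - a i) ^ 2) (𝓝[<] π)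
      (𝓝 (∑ i, 4 * π ^ 2 / (b i - a i) ^ 2)) :=
    (Continuous.tendsto (by fun_prop) π).mono_left nhdsWithin_le_nhds
  obtain ⟨τ, hτS, hτπ⟩ := ((hlim.eventually (lt_mem_nhds (sub_lt_self _ hε))).and
    (Ioo_mem_nhdsLT (neg_lt_self pi_pos))).exists
  have hθ_pos : ∀ x ∈ K, 0 < ∏ i, cos (τ / (b i - a i) * (x i - (a i + b i) / 2)) := by
    intro x hx
    rw [hK, Set.mem_preimage, Set.mem_univ_pi] at hx
    exact prod_pos fun i _ => cos_mul_sub_midpoint_pos (hab i) (abs_lt.mpr hτπ) (hx i)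
  refine ⟨fun y => ∏ i, cos (τ / (b i - a i) * (y i - (a i + b i) / 2)),
    contDiff_prod_apply (f := fun i t => cos (τ / (b i - a i) * (t - (a i + b i) / 2)))
      fun i => by fun_prop, hθ_pos, fun x hx => ?_⟩
  rw [lap_prod_apply_of_deriv_deriv_eq (fun i => by fun_prop) fun i => deriv_deriv_cos_mul_sub _ _]
  have hsum : ∑ i, 4 * τ ^ 2 / (b i - a i) ^ 2 = 4 * ∑ i, (τ / (b i - a i)) ^ 2 := by
    simp only [mul_sum, div_pow, mul_div_assoc]
  nlinarith [hθ_pos x hx]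

theorem box_eigenvalue_lower_bound {n : ℕ} (hn : 1 ≤ n)
    (a b : Fin n → ℝ) (hab : ∀ i, a i < b i)
    (K : Set (EuclideanSpace ℝ (Fin n)))
    (hK : K = (WithLp.ofLp : EuclideanSpace ℝ (Fin n) → (Fin n → ℝ)) ⁻¹' Set.pi Set.univ fun i => Set.Icc (a i) (b i)) :
    ∀ ε > (0 : ℝ), ∃ θ : EuclideanSpace ℝ (Fin n) → ℝ,
      ContDiff ℝ 2 θ ∧ (∀ x ∈ K, 0 < θ x) ∧
      ∀ x ∈ K, -4 * lap θ x ≥ (∑ i : Fin n, 4 * π ^ 2 / (b i - a i) ^ 2 - ε) * θ x :=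
  box_eigenvalue_lower_bound_general a b hab K hK
end
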